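/- The set U ∖ R with R = {u₀,…,u₇} has left and right vertical color sets both equal to {A,B,C,E,G,I}, while R has left and right vertical color sets both equal to {D,F,H,J}; in particular these two color sets are disjoint, so a tile of R and a tile of U∖R can never be horizontally adjacent in a valid Wang tiling by U. -/
import Mathlib


/-- The colors used by the Wang tile set `U`:
vertical colors `A,…,J` and horizontal colors `K,…,P`. -/
inductive UC : Type
  | A | B | C | D | E | F | G | H | I | J | K | L | M | N | O | P
deriving DecidableEq

open UC

/-- Right colors of the 19 tiles of `U`. -/
def Ur : Fin 19 → UC :=
  ![F, F, J, D, H, H, H, H, B, G, G, A, E, E, I, I, I, I, C]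

/-- Top colors of the 19 tiles of `U`. -/
def Ut : Fin 19 → UC :=
  ![O, O, M, M, P, P, K, K, O, L, L, L, P, P, P, P, K, K, N]

/-- Left colors of the 19 tiles of `U`. -/
def Ul : Fin 19 → UC :=
  ![J, H, F, F, J, H, F, D, I, E, C, I, G, I, G, I, B, A, I]

/-- Bottom colors of the 19 tiles of `U`. -/
def Ub : Fin 19 → UC :=
  ![O, L, P, K, P, N, P, P, O, O, L, O, P, P, K, K, M, K, P]

/-- A valid Wang tiling of the plane by the tile set `U`. -/
def ValidU (x : ℤ × ℤ → Fin 19) : Prop :=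
  ∀ p : ℤ × ℤ, Ur (x p) = Ul (x (p.1 + 1, p.2)) ∧
    Ut (x p) = Ub (x (p.1, p.2 + 1))

/-- The subset `R = {u₀,…,u₇}` of `U`. -/
def RU : Set (Fin 19) := {i | i.1 ≤ 7}

/-- The left and right vertical color sets of `U ∖ R` both equal
`{A,B,C,E,G,I}`, those of `R` both equal `{D,F,H,J}`; these sets are
disjoint, hence a tile of `R` and a tile of `U ∖ R` are never horizontally
adjacent in a valid tiling by `U`. -/
theorem RU_color_sets :
    Ul '' RUᶜ = {UC.A, UC.B, UC.C, UC.E, UC.G, UC.I} ∧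
    Ur '' RUᶜ = {UC.A, UC.B, UC.C, UC.E, UC.G, UC.I} ∧
    Ul '' RU = {UC.D, UC.F, UC.H, UC.J} ∧
    Ur '' RU = {UC.D, UC.F, UC.H, UC.J} ∧
    Disjoint ({UC.A, UC.B, UC.C, UC.E, UC.G, UC.I} : Set UC)
      {UC.D, UC.F, UC.H, UC.J} ∧
    ∀ x : ℤ × ℤ → Fin 19, ValidU x → ∀ p : ℤ × ℤ,
      ¬(x p ∈ RU ∧ x (p.1 + 1, p.2) ∉ RU) ∧
      ¬(x p ∉ RU ∧ x (p.1 + 1, p.2) ∈ RU) := by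
  have key : ∀ i j : Fin 19, Ur i = Ul j → (i.1 ≤ 7 ↔ j.1 ≤ 7) := by decide
  refine ⟨?_, ?_, ?_, ?_, ?_, ?_⟩
  · ext c
    simp only [Set.mem_image, Set.mem_compl_iff, RU, Set.mem_setOf_eq,
      Set.mem_insert_iff, Set.mem_singleton_iff]
    cases c <;> decide
  · ext c
    simp only [Set.mem_image, Set.mem_compl_iff, RU, Set.mem_setOf_eq,
      Set.mem_insert_iff, Set.mem_singleton_iff]
    cases c <;> decide
  · ext c
    simp only [Set.mem_image, RU, Set.mem_setOf_eq,
      Set.mem_insert_iff, Set.mem_singleton_iff]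
    cases c <;> decide
  · ext c
    simp only [Set.mem_image, RU, Set.mem_setOf_eq,
      Set.mem_insert_iff, Set.mem_singleton_iff]
    cases c <;> decide
  · rw [Set.disjoint_left]
    intro c hc hc'
    simp only [Set.mem_insert_iff, Set.mem_singleton_iff] at hc hc'
    revert hc hc'; cases c <;> decide
  · intro x hx p
    have h := (hx p).1
    have := key _ _ h
    simp only [RU, Set.mem_setOf_eq] at *
    tauto
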